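/- Fix λ > 0, γ ≥ 0 and p a probability distribution on ℝ^d with bounded support. Let U*_{λ'} denote the unique positive definite solution of E[(U x xᵀ U)/‖U x‖·1{x≠0}] + λ'U = I, and let W*_{γ,λ} denote the unique positive definite solution of E[(W x xᵀ W)/(1+γ‖W x‖)] + λW = I. Then γ²·(U*_{γλ})² ⪯ (W*_{γ,λ})² ⪯ 16(1+γ)²·(U*_{(1+γ)λ})². -/

import Mathlib

/-!
Testing the fixed-point equation of a positive definite `M` (weight `φ`, ridge coefficient `c`)
against `M⁻¹ z` gives `E[φ(x) ⟨x, z⟩²] + c ⟨z, M⁻¹ z⟩ = ‖M⁻¹ z‖²` for every `z`.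

Upper bound: let `w` be a unit vector at which `A = U⁻¹ W` attains its operator norm `s`. Then
`‖W x‖ ≤ s ‖U x‖` (as `‖Aᵀ‖ = s`) and `U⁻¹ ⪯ s W⁻¹` (operator monotonicity of the square root).
Test both equations at `z = W w`, so that `‖U⁻¹ z‖² = s²` and `‖W⁻¹ z‖ = 1`. Where `‖U x‖ < 1/2`,
Cauchy–Schwarz bounds the `U`-integrand by `s²/2`; elsewhere it is at most `2 + γ s` times the
`W`-integrand. Together with `U⁻¹ ⪯ s W⁻¹` this gives `s² ≤ s²/2 + max(2 + γ s, (1 + γ) s)`,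
hence `s ≤ 4 (1 + γ)`.

Lower bound: the same argument for `A = W⁻¹ U` at `z = U w`, now with the pointwise bound
`1 / (1 + γ ‖W x‖) ≤ s / (γ ‖U x‖)`, gives `s² ≤ s / γ`, i.e. `s ≤ 1 / γ`.
-/

open MeasureTheory Matrix
open scoped Classical

/-- Euclidean norm on `Fin d → ℝ`. -/
noncomputable def enorm' {d : ℕ} (v : Fin d → ℝ) : ℝ := Real.sqrt (∑ i, (v i)^2)

/-- Euclidean inner product on `Fin d → ℝ`. -/
noncomputable def einner' {d : ℕ} (v w : Fin d → ℝ) : ℝ := ∑ i, v i * w i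

/-- Operator (spectral) norm of a real matrix. -/
noncomputable def opNorm {d : ℕ} (M : Matrix (Fin d) (Fin d) ℝ) : ℝ :=
  ‖(Matrix.toEuclideanCLM (𝕜 := ℝ) M :
      EuclideanSpace ℝ (Fin d) →L[ℝ] EuclideanSpace ℝ (Fin d))‖

/-- Positive semidefinite square root (junk value `0` on non-PSD matrices). -/
noncomputable def psqrt {d : ℕ} (A : Matrix (Fin d) (Fin d) ℝ) : Matrix (Fin d) (Fin d) ℝ :=
  if h : A.PosSemidef then
    (h.1.eigenvectorUnitary : Matrix (Fin d) (Fin d) ℝ) *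
      diagonal ((↑) ∘ (Real.sqrt ·) ∘ h.1.eigenvalues) *
      (star h.1.eigenvectorUnitary : Matrix (Fin d) (Fin d) ℝ)
  else 0

/-- Entrywise expectation of a matrix-valued function. -/
noncomputable def mExp {d : ℕ} (p : Measure (Fin d → ℝ))
    (f : (Fin d → ℝ) → Matrix (Fin d) (Fin d) ℝ) : Matrix (Fin d) (Fin d) ℝ :=
  Matrix.of fun i j => ∫ x, f x i j ∂p

/-- The LDP operator `F(U) = E[(U x xᵀ U)/‖U x‖ · 1{x ≠ 0}] + λ U`. -/
noncomputable def FLDP {d : ℕ} (p : Measure (Fin d → ℝ)) (lam : ℝ)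
    (U : Matrix (Fin d) (Fin d) ℝ) : Matrix (Fin d) (Fin d) ℝ :=
  mExp p (fun x => if x = 0 then 0
    else (enorm' (U.mulVec x))⁻¹ • vecMulVec (U.mulVec x) (U.mulVec x)) + lam • U

/-- The DP operator `G(W) = E[(W x xᵀ W)/(1 + γ‖W x‖)] + λ W`. -/
noncomputable def FJDP {d : ℕ} (p : Measure (Fin d → ℝ)) (γ lam : ℝ)
    (W : Matrix (Fin d) (Fin d) ℝ) : Matrix (Fin d) (Fin d) ℝ :=
  mExp p (fun x => (1 + γ * enorm' (W.mulVec x))⁻¹ • vecMulVec (W.mulVec x) (W.mulVec x))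
    + lam • W

/-- `sym(A) = (Aᵀ A)^{1/2}`. -/
noncomputable def symMat {d : ℕ} (A : Matrix (Fin d) (Fin d) ℝ) : Matrix (Fin d) (Fin d) ℝ :=
  psqrt (Aᵀ * A)

/-- Smallest eigenvalue of a Hermitian matrix (junk value `0` otherwise). -/
noncomputable def lmin {d : ℕ} (A : Matrix (Fin d) (Fin d) ℝ) : ℝ :=
  if h : A.IsHermitian then ⨅ i, h.eigenvalues i else 0

/-- Largest eigenvalue of a Hermitian matrix (junk value `0` otherwise). -/
noncomputable def lmax {d : ℕ} (A : Matrix (Fin d) (Fin d) ℝ) : ℝ :=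
  if h : A.IsHermitian then ⨆ i, h.eigenvalues i else 0

section EuclideanNorm
variable {d : ℕ}

lemma enorm'_eq_norm (v : Fin d → ℝ) :
    enorm' v = ‖(WithLp.toLp 2 v : EuclideanSpace ℝ (Fin d))‖ := by
  simp [enorm', EuclideanSpace.norm_eq]

lemma enorm'_nonneg (v : Fin d → ℝ) : 0 ≤ enorm' v := Real.sqrt_nonneg _

lemma enorm'_sq (v : Fin d → ℝ) : enorm' v ^ 2 = v ⬝ᵥ v := by
  rw [enorm', Real.sq_sqrt (by positivity)]
  simp [dotProduct, sq]

lemma enorm'_mulVec_le (M : Matrix (Fin d) (Fin d) ℝ) (v : Fin d → ℝ) :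
    enorm' (M *ᵥ v) ≤ opNorm M * enorm' v := by
  simpa [enorm'_eq_norm, opNorm] using (toEuclideanCLM (𝕜 := ℝ) M).le_opNorm (WithLp.toLp 2 v)

lemma continuous_enorm' : Continuous (enorm' : (Fin d → ℝ) → ℝ) := by
  unfold enorm'; fun_prop

lemma abs_apply_le_enorm' (v : Fin d → ℝ) (i : Fin d) : |v i| ≤ enorm' v := by
  simpa [enorm'_eq_norm] using PiLp.norm_apply_le (WithLp.toLp 2 v) i

lemma enorm'_le_mul_enorm'_of_dotProduct_le {v w : Fin d → ℝ} {s : ℝ} (hs : 0 ≤ s)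
    (h : v ⬝ᵥ v ≤ s ^ 2 * (w ⬝ᵥ w)) : enorm' v ≤ s * enorm' w := by
  rw [← pow_le_pow_iff_left₀ (enorm'_nonneg v) (mul_nonneg hs (enorm'_nonneg w)) two_ne_zero,
    mul_pow, enorm'_sq, enorm'_sq]
  exact h

end EuclideanNorm

namespace Matrix
variable {n : Type*} [Fintype n]

lemma sq_dotProduct_le (v w : n → ℝ) : (v ⬝ᵥ w) ^ 2 ≤ (v ⬝ᵥ v) * (w ⬝ᵥ w) := by
  simpa [dotProduct, sq] using Finset.sum_mul_sq_le_sq_mul_sq Finset.univ v w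

lemma dotProduct_self_nonneg (v : n → ℝ) : 0 ≤ v ⬝ᵥ v := dotProduct_star_self_nonneg v

lemma IsSymm.dotProduct_mulVec_comm {A : Matrix n n ℝ} (hA : A.IsSymm) (v w : n → ℝ) :
    v ⬝ᵥ A *ᵥ w = A *ᵥ v ⬝ᵥ w := by
  rw [dotProduct_mulVec, ← vecMul_transpose, hA.eq]

lemma norm_sq_transpose_mulVec_le {A : Matrix n n ℝ} {c : ℝ} (hc : 0 ≤ c)
    (h : ∀ z, A *ᵥ z ⬝ᵥ A *ᵥ z ≤ c * (z ⬝ᵥ z)) (z : n → ℝ) :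
    Aᵀ *ᵥ z ⬝ᵥ Aᵀ *ᵥ z ≤ c * (z ⬝ᵥ z) := by
  have ht : Aᵀ *ᵥ z ⬝ᵥ Aᵀ *ᵥ z = z ⬝ᵥ A *ᵥ (Aᵀ *ᵥ z) := by
    rw [dotProduct_mulVec z A, ← mulVec_transpose]
  have hcs : (Aᵀ *ᵥ z ⬝ᵥ Aᵀ *ᵥ z) ^ 2 ≤ (z ⬝ᵥ z) * (c * (Aᵀ *ᵥ z ⬝ᵥ Aᵀ *ᵥ z)) := by
    nth_rw 1 [ht]
    exact (sq_dotProduct_le _ _).trans (mul_le_mul_of_nonneg_left (h _) (dotProduct_self_nonneg z))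
  by_contra! hlt
  have hpos : 0 < Aᵀ *ᵥ z ⬝ᵥ Aᵀ *ᵥ z := (mul_nonneg hc (dotProduct_self_nonneg z)).trans_lt hlt
  nlinarith [mul_lt_mul_of_pos_right hlt hpos]

lemma posSemidef_sub_of_dotProduct_mulVec_le {M N : Matrix n n ℝ} (hM : M.IsHermitian)
    (hN : N.IsHermitian) (h : ∀ x, x ⬝ᵥ N *ᵥ x ≤ x ⬝ᵥ M *ᵥ x) : (M - N).PosSemidef :=
  .of_dotProduct_mulVec_nonneg (hM.sub hN) fun x => by
    simpa only [star_trivial, sub_mulVec, dotProduct_sub, sub_nonneg] using h x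

variable [DecidableEq n]

lemma IsSymm.dotProduct_sq_mulVec {A : Matrix n n ℝ} (hA : A.IsSymm) (x : n → ℝ) :
    x ⬝ᵥ (A ^ 2) *ᵥ x = A *ᵥ x ⬝ᵥ A *ᵥ x := by
  rw [sq, ← mulVec_mulVec, hA.dotProduct_mulVec_comm]

lemma exists_unit_forall_dotProduct_mulVec_le [Nonempty n] {M : Matrix n n ℝ} (hM : M.IsHermitian) :
    ∃ w : n → ℝ, w ⬝ᵥ w = 1 ∧ ∀ z, z ⬝ᵥ M *ᵥ z ≤ (w ⬝ᵥ M *ᵥ w) * (z ⬝ᵥ z) := by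
  obtain ⟨i, hi⟩ := Finite.exists_max hM.eigenvalues
  set w : n → ℝ := ⇑(hM.eigenvectorBasis i)
  have hw : w ⬝ᵥ w = 1 := by
    have h := real_inner_self_eq_norm_sq (hM.eigenvectorBasis i)
    rw [hM.eigenvectorBasis.orthonormal.1 i, one_pow, EuclideanSpace.inner_eq_star_dotProduct] at h
    simpa using h
  have hMw : w ⬝ᵥ M *ᵥ w = hM.eigenvalues i := by
    rw [hM.mulVec_eigenvectorBasis, dotProduct_smul, hw, smul_eq_mul, mul_one]
  have hpsd : (algebraMap ℝ _ (hM.eigenvalues i) - M).PosSemidef := by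
    rw [posSemidef_iff_isHermitian_and_spectrum_nonneg]
    refine ⟨?_, ?_⟩
    · rw [algebraMap_eq_diagonal]; exact (isHermitian_diagonal _).sub hM
    rw [← spectrum.singleton_sub_eq, hM.spectrum_real_eq_range_eigenvalues]
    rintro _ ⟨_, rfl, _, ⟨j, rfl⟩, rfl⟩
    simpa using hi j
  refine ⟨w, hw, fun z => ?_⟩
  have := hpsd.dotProduct_mulVec_nonneg z
  simp only [star_trivial, Algebra.algebraMap_eq_smul_one, sub_mulVec, smul_mulVec, one_mulVec,
    dotProduct_sub, dotProduct_smul, smul_eq_mul, sub_nonneg] at this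
  rwa [hMw]

lemma norm_sq_mulVec_le_of_forall_maximizer (A : Matrix n n ℝ) {c : ℝ}
    (h : ∀ w : n → ℝ, w ⬝ᵥ w = 1 →
      (∀ z, A *ᵥ z ⬝ᵥ A *ᵥ z ≤ (A *ᵥ w ⬝ᵥ A *ᵥ w) * (z ⬝ᵥ z)) → A *ᵥ w ⬝ᵥ A *ᵥ w ≤ c)
    (z : n → ℝ) : A *ᵥ z ⬝ᵥ A *ᵥ z ≤ c * (z ⬝ᵥ z) := by
  cases isEmpty_or_nonempty n
  · simp [Subsingleton.elim z 0]
  have hquad (v : n → ℝ) : v ⬝ᵥ (Aᴴ * A) *ᵥ v = A *ᵥ v ⬝ᵥ A *ᵥ v := by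
    rw [← mulVec_mulVec, dotProduct_mulVec, vecMul_conjTranspose]
    rfl
  obtain ⟨w, hw, hmax⟩ :=
    exists_unit_forall_dotProduct_mulVec_le (isHermitian_conjTranspose_mul_self A)
  simp only [hquad] at hmax
  calc A *ᵥ z ⬝ᵥ A *ᵥ z ≤ (A *ᵥ w ⬝ᵥ A *ᵥ w) * (z ⬝ᵥ z) := hmax z
    _ ≤ c * (z ⬝ᵥ z) := by gcongr; exacts [dotProduct_self_nonneg z, h w hw hmax]

-- Operator monotonicity of the square root: `A² ⪯ c² B²` implies `A ⪯ c B`.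
lemma dotProduct_mulVec_le_of_norm_sq_mulVec_le {A B : Matrix n n ℝ} (hA : A.PosDef)
    (hB : B.PosSemidef) {c : ℝ} (hc : 0 ≤ c)
    (h : ∀ z, A *ᵥ z ⬝ᵥ A *ᵥ z ≤ c ^ 2 * (B *ᵥ z ⬝ᵥ B *ᵥ z)) (z : n → ℝ) :
    z ⬝ᵥ A *ᵥ z ≤ c * (z ⬝ᵥ B *ᵥ z) := by
  have hD : (c • B - A).IsHermitian := (hB.smul hc).isHermitian.sub hA.isHermitian
  have hpsd : (c • B - A).PosSemidef := by
    rw [hD.posSemidef_iff_eigenvalues_nonneg]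
    intro i
    set w : n → ℝ := ⇑(hD.eigenvectorBasis i)
    set a := c • (B *ᵥ w)
    set b := A *ᵥ w
    have hw : w ≠ 0 := fun h0 =>
      hD.eigenvectorBasis.orthonormal.ne_zero i (by ext j; exact congrFun h0 j)
    have hab : a - b = hD.eigenvalues i • w := by
      rw [← hD.mulVec_eigenvectorBasis, sub_mulVec, smul_mulVec]
    have key : a ⬝ᵥ a - b ⬝ᵥ b = hD.eigenvalues i * (w ⬝ᵥ a + w ⬝ᵥ b) := by
      have : (a - b) ⬝ᵥ (a + b) = a ⬝ᵥ a - b ⬝ᵥ b := by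
        rw [sub_dotProduct, dotProduct_add, dotProduct_add, dotProduct_comm b a]; ring
      rw [← this, hab, smul_dotProduct, dotProduct_add, smul_eq_mul]
    have hsum : 0 < w ⬝ᵥ a + w ⬝ᵥ b := by
      have hBw : 0 ≤ w ⬝ᵥ a := by
        rw [dotProduct_smul, smul_eq_mul]; exact mul_nonneg hc (hB.dotProduct_mulVec_nonneg w)
      have hAw : 0 < w ⬝ᵥ b := by simpa only [star_trivial] using hA.dotProduct_mulVec_pos hw
      linarith
    have hdiff : 0 ≤ a ⬝ᵥ a - b ⬝ᵥ b := by
      have : a ⬝ᵥ a = c ^ 2 * (B *ᵥ w ⬝ᵥ B *ᵥ w) := by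
        rw [smul_dotProduct, dotProduct_smul, smul_eq_mul, smul_eq_mul]; ring
      linarith [h w]
    rw [key] at hdiff
    exact (mul_nonneg_iff_of_pos_right hsum).mp hdiff
  have := hpsd.dotProduct_mulVec_nonneg z
  simp only [star_trivial, sub_mulVec, smul_mulVec, dotProduct_sub, dotProduct_smul, smul_eq_mul,
    sub_nonneg] at this
  exact this

variable {M : Matrix n n ℝ}

lemma PosDef.mulVec_inv_mulVec (hM : M.PosDef) (v : n → ℝ) : M *ᵥ (M⁻¹ *ᵥ v) = v := by
  rw [mulVec_mulVec, mul_nonsing_inv _ ((isUnit_iff_isUnit_det _).mp hM.isUnit), one_mulVec]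

lemma PosDef.inv_mulVec_mulVec (hM : M.PosDef) (v : n → ℝ) : M⁻¹ *ᵥ (M *ᵥ v) = v := by
  rw [mulVec_mulVec, nonsing_inv_mul _ ((isUnit_iff_isUnit_det _).mp hM.isUnit), one_mulVec]

lemma PosDef.dotProduct_eq_mulVec_dotProduct_inv_mulVec (hM : M.PosDef) (x z : n → ℝ) :
    x ⬝ᵥ z = M *ᵥ x ⬝ᵥ M⁻¹ *ᵥ z := by
  rw [← IsSymm.dotProduct_mulVec_comm (isHermitian_iff_isSymm.mp hM.isHermitian),
    hM.mulVec_inv_mulVec]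

lemma PosDef.sq_dotProduct_le_mulVec_mul_inv_mulVec (hM : M.PosDef) (x z : n → ℝ) :
    (x ⬝ᵥ z) ^ 2 ≤ (M *ᵥ x ⬝ᵥ M *ᵥ x) * (M⁻¹ *ᵥ z ⬝ᵥ M⁻¹ *ᵥ z) := by
  rw [hM.dotProduct_eq_mulVec_dotProduct_inv_mulVec]
  exact sq_dotProduct_le _ _

variable {P Q : Matrix n n ℝ}

lemma PosDef.norm_sq_mulVec_le_of_inv_mul (hP : P.PosDef) (hQ : Q.PosDef) {c : ℝ} (hc : 0 ≤ c)
    (h : ∀ z, (Q⁻¹ * P) *ᵥ z ⬝ᵥ (Q⁻¹ * P) *ᵥ z ≤ c * (z ⬝ᵥ z)) (x : n → ℝ) :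
    P *ᵥ x ⬝ᵥ P *ᵥ x ≤ c * (Q *ᵥ x ⬝ᵥ Q *ᵥ x) := by
  have hT : (Q⁻¹ * P)ᵀ *ᵥ (Q *ᵥ x) = P *ᵥ x := by
    rw [transpose_mul, transpose_nonsing_inv, (isHermitian_iff_isSymm.mp hP.isHermitian).eq,
      (isHermitian_iff_isSymm.mp hQ.isHermitian).eq, ← mulVec_mulVec, hQ.inv_mulVec_mulVec]
  simpa only [hT] using norm_sq_transpose_mulVec_le hc h (Q *ᵥ x)

lemma PosDef.inv_dotProduct_mulVec_le_of_inv_mul (hP : P.PosDef) (hQ : Q.PosDef) {s : ℝ}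
    (hs : 0 ≤ s) (h : ∀ z, (Q⁻¹ * P) *ᵥ z ⬝ᵥ (Q⁻¹ * P) *ᵥ z ≤ s ^ 2 * (z ⬝ᵥ z)) (x : n → ℝ) :
    x ⬝ᵥ Q⁻¹ *ᵥ x ≤ s * (x ⬝ᵥ P⁻¹ *ᵥ x) := by
  refine dotProduct_mulVec_le_of_norm_sq_mulVec_le hQ.inv hP.inv.posSemidef hs (fun y => ?_) x
  simpa only [← mulVec_mulVec, hP.mulVec_inv_mulVec] using h (P⁻¹ *ᵥ y)

end Matrix

section Expectation
variable {d : ℕ} {p : Measure (Fin d → ℝ)}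

lemma integrable_dotProduct_mulVec {f : (Fin d → ℝ) → Matrix (Fin d) (Fin d) ℝ}
    (hf : ∀ i j, Integrable (fun x => f x i j) p) (u : Fin d → ℝ) :
    Integrable (fun x => u ⬝ᵥ f x *ᵥ u) p := by
  simp only [dotProduct, mulVec, Finset.mul_sum]
  exact integrable_finsetSum _ fun i _ => integrable_finsetSum _ fun j _ =>
    ((hf i j).mul_const _).const_mul _

lemma dotProduct_mExp_mulVec {f : (Fin d → ℝ) → Matrix (Fin d) (Fin d) ℝ}
    (hf : ∀ i j, Integrable (fun x => f x i j) p) (u : Fin d → ℝ) :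
    u ⬝ᵥ mExp p f *ᵥ u = ∫ x, u ⬝ᵥ f x *ᵥ u ∂p := by
  simp only [dotProduct, mulVec, Finset.mul_sum]
  rw [integral_finsetSum _ fun i _ => integrable_finsetSum _ fun j _ =>
    ((hf i j).mul_const _).const_mul _]
  refine Finset.sum_congr rfl fun i _ => ?_
  rw [integral_finsetSum _ fun j _ => ((hf i j).mul_const _).const_mul _]
  refine Finset.sum_congr rfl fun j _ => ?_
  rw [integral_const_mul, integral_mul_const]
  rfl

variable {M : Matrix (Fin d) (Fin d) ℝ} {φ : (Fin d → ℝ) → ℝ}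

namespace Matrix

lemma PosDef.dotProduct_smul_vecMulVec_mulVec (hM : M.PosDef) (a : ℝ) (x z : Fin d → ℝ) :
    M⁻¹ *ᵥ z ⬝ᵥ (a • vecMulVec (M *ᵥ x) (M *ᵥ x)) *ᵥ (M⁻¹ *ᵥ z) = a * (x ⬝ᵥ z) ^ 2 := by
  rw [smul_mulVec, vecMulVec_mulVec, hM.dotProduct_eq_mulVec_dotProduct_inv_mulVec x z,
    dotProduct_comm]
  simp only [smul_dotProduct, op_smul_eq_smul, smul_eq_mul]
  ring

lemma PosDef.integrable_mul_dotProduct_sq (hM : M.PosDef)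
    (hint : ∀ i j, Integrable (fun x => (φ x • vecMulVec (M *ᵥ x) (M *ᵥ x)) i j) p)
    (z : Fin d → ℝ) : Integrable (fun x => φ x * (x ⬝ᵥ z) ^ 2) p := by
  simpa only [hM.dotProduct_smul_vecMulVec_mulVec] using
    integrable_dotProduct_mulVec hint (M⁻¹ *ᵥ z)

lemma PosDef.integral_add_eq_of_mExp_add_smul_eq_one (hM : M.PosDef)
    (hint : ∀ i j, Integrable (fun x => (φ x • vecMulVec (M *ᵥ x) (M *ᵥ x)) i j) p) {c : ℝ}
    (hfix : mExp p (fun x => φ x • vecMulVec (M *ᵥ x) (M *ᵥ x)) + c • M = 1) (z : Fin d → ℝ) :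
    ∫ x, φ x * (x ⬝ᵥ z) ^ 2 ∂p + c * (z ⬝ᵥ M⁻¹ *ᵥ z) = M⁻¹ *ᵥ z ⬝ᵥ M⁻¹ *ᵥ z := by
  have h := congrArg (fun A => M⁻¹ *ᵥ z ⬝ᵥ A *ᵥ (M⁻¹ *ᵥ z)) hfix
  rw [add_mulVec, dotProduct_add, dotProduct_mExp_mulVec hint] at h
  simp_rw [hM.dotProduct_smul_vecMulVec_mulVec] at h
  simp only [one_mulVec, smul_mulVec, dotProduct_smul, smul_eq_mul, hM.mulVec_inv_mulVec] at h
  rwa [dotProduct_comm (M⁻¹ *ᵥ z) z] at h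

end Matrix

lemma integrable_smul_vecMulVec_apply [IsFiniteMeasure p] {R C : ℝ}
    (hbdd : ∀ᵐ x ∂p, enorm' x ≤ R) (hφ : Measurable φ)
    (hC : ∀ x, enorm' x ≤ R → |φ x| * enorm' (M *ᵥ x) ^ 2 ≤ C) (i j : Fin d) :
    Integrable (fun x => (φ x • vecMulVec (M *ᵥ x) (M *ᵥ x)) i j) p := by
  simp only [Matrix.smul_apply, vecMulVec_apply, smul_eq_mul]
  refine (integrable_const C).mono' (by fun_prop) (hbdd.mono fun x hx => ?_)
  rw [Real.norm_eq_abs, abs_mul, abs_mul]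
  calc |φ x| * (|(M *ᵥ x) i| * |(M *ᵥ x) j|) ≤ |φ x| * enorm' (M *ᵥ x) ^ 2 := by
        rw [sq]
        exact mul_le_mul_of_nonneg_left (mul_le_mul (abs_apply_le_enorm' _ i)
          (abs_apply_le_enorm' _ j) (abs_nonneg _) (enorm'_nonneg _)) (abs_nonneg _)
    _ ≤ C := hC x hx

end Expectation

section FixedPointEquations
variable {d : ℕ} {p : Measure (Fin d → ℝ)} {R : ℝ}

lemma measurable_enorm'_mulVec (M : Matrix (Fin d) (Fin d) ℝ) :
    Measurable fun x => enorm' (M *ᵥ x) :=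
  continuous_enorm'.measurable.comp (by fun_prop)

/- The indicator of `x ≠ 0` in `FLDP` is redundant since `0⁻¹ = 0`; dropping it puts `FLDP`
in the same form as `FJDP`. -/
lemma FLDP_eq (c : ℝ) (U : Matrix (Fin d) (Fin d) ℝ) :
    FLDP p c U = mExp p (fun x => (enorm' (U *ᵥ x))⁻¹ • vecMulVec (U *ᵥ x) (U *ᵥ x)) + c • U := by
  unfold FLDP
  congr
  ext x : 1
  split_ifs with hx
  · simp [hx]
  · rfl

variable [IsFiniteMeasure p]

lemma integrable_FLDP_apply (hbdd : ∀ᵐ x ∂p, enorm' x ≤ R) (U : Matrix (Fin d) (Fin d) ℝ)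
    (i j : Fin d) :
    Integrable (fun x => ((enorm' (U *ᵥ x))⁻¹ • vecMulVec (U *ᵥ x) (U *ᵥ x)) i j) p := by
  refine integrable_smul_vecMulVec_apply (φ := fun x => (enorm' (U *ᵥ x))⁻¹) hbdd
    (measurable_enorm'_mulVec U).inv (C := opNorm U * R) (fun x hx => ?_) i j
  rw [abs_inv, abs_of_nonneg (enorm'_nonneg _), sq, ← mul_assoc, inv_mul_mul_self]
  exact (enorm'_mulVec_le U x).trans (mul_le_mul_of_nonneg_left hx (norm_nonneg _))

lemma integrable_FJDP_apply (hbdd : ∀ᵐ x ∂p, enorm' x ≤ R) {γ : ℝ} (hγ : 0 ≤ γ)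
    (W : Matrix (Fin d) (Fin d) ℝ) (i j : Fin d) :
    Integrable (fun x => ((1 + γ * enorm' (W *ᵥ x))⁻¹ • vecMulVec (W *ᵥ x) (W *ᵥ x)) i j) p := by
  refine integrable_smul_vecMulVec_apply (φ := fun x => (1 + γ * enorm' (W *ᵥ x))⁻¹) hbdd
    (measurable_const.add ((measurable_enorm'_mulVec W).const_mul γ)).inv
    (C := (opNorm W * R) ^ 2) (fun x hx => ?_) i j
  have he := enorm'_nonneg (W *ᵥ x)
  have hφ : |(1 + γ * enorm' (W *ᵥ x))⁻¹| ≤ 1 := by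
    rw [abs_inv, abs_of_pos (by positivity)]
    exact inv_le_one_of_one_le₀ (by nlinarith)
  calc |(1 + γ * enorm' (W *ᵥ x))⁻¹| * enorm' (W *ᵥ x) ^ 2 ≤ enorm' (W *ᵥ x) ^ 2 :=
        mul_le_of_le_one_left (by positivity) hφ
    _ ≤ (opNorm W * R) ^ 2 := pow_le_pow_left₀ he
        ((enorm'_mulVec_le W x).trans (mul_le_mul_of_nonneg_left hx (norm_nonneg _))) 2

lemma integral_add_eq_of_FLDP_eq_one (hbdd : ∀ᵐ x ∂p, enorm' x ≤ R) {c : ℝ}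
    {U : Matrix (Fin d) (Fin d) ℝ} (hU : U.PosDef) (hfix : FLDP p c U = 1) (z : Fin d → ℝ) :
    ∫ x, (enorm' (U *ᵥ x))⁻¹ * (x ⬝ᵥ z) ^ 2 ∂p + c * (z ⬝ᵥ U⁻¹ *ᵥ z) = U⁻¹ *ᵥ z ⬝ᵥ U⁻¹ *ᵥ z :=
  hU.integral_add_eq_of_mExp_add_smul_eq_one (integrable_FLDP_apply hbdd U)
    ((FLDP_eq c U).symm.trans hfix) z

lemma integral_add_eq_of_FJDP_eq_one (hbdd : ∀ᵐ x ∂p, enorm' x ≤ R) {γ c : ℝ} (hγ : 0 ≤ γ)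
    {W : Matrix (Fin d) (Fin d) ℝ} (hW : W.PosDef) (hfix : FJDP p γ c W = 1) (z : Fin d → ℝ) :
    ∫ x, (1 + γ * enorm' (W *ᵥ x))⁻¹ * (x ⬝ᵥ z) ^ 2 ∂p + c * (z ⬝ᵥ W⁻¹ *ᵥ z)
      = W⁻¹ *ᵥ z ⬝ᵥ W⁻¹ *ᵥ z :=
  hW.integral_add_eq_of_mExp_add_smul_eq_one (integrable_FJDP_apply hbdd hγ W) hfix z

end FixedPointEquations

section ScalarInequalities
variable {γ s a b q ν : ℝ}

lemma inv_one_add_mul_mul_le (hγ : 0 < γ) (hs : 0 ≤ s) (ha : 0 ≤ a) (hb : 0 ≤ b)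
    (hab : a ≤ s * b) (hq0 : 0 ≤ q) (hq : q ≤ a ^ 2) : (1 + γ * b)⁻¹ * q ≤ s / γ * (a⁻¹ * q) := by
  rcases ha.eq_or_lt with rfl | ha
  · simp [le_antisymm (by simpa using hq) hq0]
  have key : (1 + γ * b)⁻¹ ≤ s / (γ * a) := by
    rw [inv_eq_one_div, div_le_div_iff₀ (by positivity) (by positivity)]
    nlinarith
  calc (1 + γ * b)⁻¹ * q ≤ s / (γ * a) * q := mul_le_mul_of_nonneg_right key hq0
    _ = s / γ * (a⁻¹ * q) := by field_simp

lemma inv_mul_le_half_add (hγ : 0 ≤ γ) (hs : 0 ≤ s) (ha : 0 ≤ a) (hb : 0 ≤ b) (hba : b ≤ s * a)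
    (hq0 : 0 ≤ q) (hν : 0 ≤ ν) (hq : q ≤ a ^ 2 * ν) :
    a⁻¹ * q ≤ ν / 2 + (2 + γ * s) * ((1 + γ * b)⁻¹ * q) := by
  have hb' : 0 < 1 + γ * b := by positivity
  rcases lt_or_ge a (1 / 2) with hsmall | hbig
  · have : a⁻¹ * q ≤ ν / 2 := by
      rcases ha.eq_or_lt with rfl | ha
      · rw [_root_.inv_zero, zero_mul]; positivity
      calc a⁻¹ * q ≤ a⁻¹ * (a ^ 2 * ν) := mul_le_mul_of_nonneg_left hq (by positivity)
        _ = a * ν := by field_simp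
        _ ≤ ν / 2 := by nlinarith
    have : 0 ≤ (2 + γ * s) * ((1 + γ * b)⁻¹ * q) := by positivity
    linarith
  · have key : a⁻¹ ≤ (2 + γ * s) * (1 + γ * b)⁻¹ := by
      rw [← div_eq_mul_inv, inv_eq_one_div, div_le_div_iff₀ (by linarith) hb']
      nlinarith [mul_le_mul_of_nonneg_left hba hγ]
    have : 0 ≤ ν / 2 := by positivity
    nlinarith [mul_le_mul_of_nonneg_right key hq0]

lemma sq_le_sixteen_mul_sq (hγ : 0 ≤ γ) (hs : 0 ≤ s) (ha : 0 ≤ a) (hb : 0 ≤ b) (hab : a + b = 1)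
    (h : s ^ 2 ≤ s ^ 2 / 2 + (2 + γ * s) * a + (1 + γ) * s * b) : s ^ 2 ≤ 16 * (1 + γ) ^ 2 := by
  have h1 : s ^ 2 ≤ 4 + 2 * (1 + γ) * s := by
    nlinarith [mul_nonneg (mul_nonneg hγ hs) ha, mul_nonneg hs ha, mul_nonneg (mul_nonneg hγ hs) hb]
  have h2 : s ≤ 4 * (1 + γ) := by nlinarith
  nlinarith

end ScalarInequalities

section FixedPointComparison
variable {d : ℕ} {p : Measure (Fin d → ℝ)} [IsProbabilityMeasure p] {R lam γ : ℝ}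
  {U W : Matrix (Fin d) (Fin d) ℝ}

theorem sq_mul_norm_sq_mulVec_le_of_FLDP_of_FJDP (hbdd : ∀ᵐ x ∂p, enorm' x ≤ R) (hlam : 0 ≤ lam)
    (hγ : 0 ≤ γ) (hU : U.PosDef) (hW : W.PosDef) (hUfix : FLDP p (γ * lam) U = 1)
    (hWfix : FJDP p γ lam W = 1) (x : Fin d → ℝ) :
    γ ^ 2 * (U *ᵥ x ⬝ᵥ U *ᵥ x) ≤ W *ᵥ x ⬝ᵥ W *ᵥ x := by
  rcases hγ.eq_or_lt with rfl | hγ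
  · simpa using dotProduct_self_nonneg (W *ᵥ x)
  suffices hA : ∀ z, (W⁻¹ * U) *ᵥ z ⬝ᵥ (W⁻¹ * U) *ᵥ z ≤ γ⁻¹ ^ 2 * (z ⬝ᵥ z) by
    have := hU.norm_sq_mulVec_le_of_inv_mul hW (by positivity) hA x
    rwa [inv_pow, ← div_eq_inv_mul, le_div_iff₀' (by positivity)] at this
  refine norm_sq_mulVec_le_of_forall_maximizer _ fun w hw hmax => ?_
  set ν := (W⁻¹ * U) *ᵥ w ⬝ᵥ (W⁻¹ * U) *ᵥ w
  set s := Real.sqrt ν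
  have hs : s ^ 2 = ν := Real.sq_sqrt (dotProduct_self_nonneg _)
  rw [← hs] at hmax
  have hUW (y : Fin d → ℝ) : enorm' (U *ᵥ y) ≤ s * enorm' (W *ᵥ y) :=
    enorm'_le_mul_enorm'_of_dotProduct_le (Real.sqrt_nonneg _)
      (hU.norm_sq_mulVec_le_of_inv_mul hW (sq_nonneg s) hmax y)
  have hinv := hU.inv_dotProduct_mulVec_le_of_inv_mul hW (Real.sqrt_nonneg _) hmax
  set z := U *ᵥ w
  have hWz : W⁻¹ *ᵥ z ⬝ᵥ W⁻¹ *ᵥ z = ν := by simp only [z, ν, mulVec_mulVec]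
  have hUz : U⁻¹ *ᵥ z ⬝ᵥ U⁻¹ *ᵥ z = 1 := by rw [hU.inv_mulVec_mulVec, hw]
  have hpt (y : Fin d → ℝ) : (1 + γ * enorm' (W *ᵥ y))⁻¹ * (y ⬝ᵥ z) ^ 2
      ≤ s / γ * ((enorm' (U *ᵥ y))⁻¹ * (y ⬝ᵥ z) ^ 2) := by
    refine inv_one_add_mul_mul_le hγ (Real.sqrt_nonneg _) (enorm'_nonneg _) (enorm'_nonneg _)
      (hUW y) (sq_nonneg _) ?_
    simpa only [enorm'_sq, hUz, mul_one] using hU.sq_dotProduct_le_mulVec_mul_inv_mulVec y z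
  have hmono := integral_mono
    (hW.integrable_mul_dotProduct_sq (integrable_FJDP_apply hbdd hγ.le W) z)
    ((hU.integrable_mul_dotProduct_sq (integrable_FLDP_apply hbdd U) z).const_mul (s / γ)) hpt
  rw [integral_const_mul] at hmono
  have hνs : ν ≤ s / γ :=
    calc ν = ∫ y, (1 + γ * enorm' (W *ᵥ y))⁻¹ * (y ⬝ᵥ z) ^ 2 ∂p + lam * (z ⬝ᵥ W⁻¹ *ᵥ z) := by
          rw [integral_add_eq_of_FJDP_eq_one hbdd hγ.le hW hWfix z, hWz]
      _ ≤ s / γ * ∫ y, (enorm' (U *ᵥ y))⁻¹ * (y ⬝ᵥ z) ^ 2 ∂p + lam * (s * (z ⬝ᵥ U⁻¹ *ᵥ z)) :=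
          add_le_add hmono (mul_le_mul_of_nonneg_left (hinv z) hlam)
      _ = s / γ * (∫ y, (enorm' (U *ᵥ y))⁻¹ * (y ⬝ᵥ z) ^ 2 ∂p + γ * lam * (z ⬝ᵥ U⁻¹ *ᵥ z)) := by
          field_simp
      _ = s / γ := by rw [integral_add_eq_of_FLDP_eq_one hbdd hU hUfix z, hUz, mul_one]
  have hsγ : s ≤ γ⁻¹ := by
    rw [← hs, div_eq_mul_inv] at hνs
    nlinarith [Real.sqrt_nonneg ν, inv_pos.mpr hγ]
  rw [← hs]
  exact pow_le_pow_left₀ (Real.sqrt_nonneg _) hsγ 2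

theorem norm_sq_mulVec_le_of_FLDP_of_FJDP (hbdd : ∀ᵐ x ∂p, enorm' x ≤ R) (hlam : 0 ≤ lam)
    (hγ : 0 ≤ γ) (hU : U.PosDef) (hW : W.PosDef) (hUfix : FLDP p ((1 + γ) * lam) U = 1)
    (hWfix : FJDP p γ lam W = 1) (x : Fin d → ℝ) :
    W *ᵥ x ⬝ᵥ W *ᵥ x ≤ 16 * (1 + γ) ^ 2 * (U *ᵥ x ⬝ᵥ U *ᵥ x) := by
  refine hW.norm_sq_mulVec_le_of_inv_mul hU (by positivity)
    (norm_sq_mulVec_le_of_forall_maximizer _ fun w hw hmax => ?_) x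
  set ν := (U⁻¹ * W) *ᵥ w ⬝ᵥ (U⁻¹ * W) *ᵥ w
  set s := Real.sqrt ν
  have hν : 0 ≤ ν := dotProduct_self_nonneg _
  have hs : s ^ 2 = ν := Real.sq_sqrt hν
  rw [← hs] at hmax
  have hWU (y : Fin d → ℝ) : enorm' (W *ᵥ y) ≤ s * enorm' (U *ᵥ y) :=
    enorm'_le_mul_enorm'_of_dotProduct_le (Real.sqrt_nonneg _)
      (hW.norm_sq_mulVec_le_of_inv_mul hU (sq_nonneg s) hmax y)
  have hinv := hW.inv_dotProduct_mulVec_le_of_inv_mul hU (Real.sqrt_nonneg _) hmax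
  set z := W *ᵥ w
  have hUz : U⁻¹ *ᵥ z ⬝ᵥ U⁻¹ *ᵥ z = ν := by simp only [z, ν, mulVec_mulVec]
  have hWz : W⁻¹ *ᵥ z ⬝ᵥ W⁻¹ *ᵥ z = 1 := by rw [hW.inv_mulVec_mulVec, hw]
  have hpt (y : Fin d → ℝ) : (enorm' (U *ᵥ y))⁻¹ * (y ⬝ᵥ z) ^ 2
      ≤ ν / 2 + (2 + γ * s) * ((1 + γ * enorm' (W *ᵥ y))⁻¹ * (y ⬝ᵥ z) ^ 2) := by
    refine inv_mul_le_half_add hγ (Real.sqrt_nonneg _) (enorm'_nonneg _) (enorm'_nonneg _)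
      (hWU y) (sq_nonneg _) hν ?_
    simpa only [enorm'_sq, hUz] using hU.sq_dotProduct_le_mulVec_mul_inv_mulVec y z
  have hintW := hW.integrable_mul_dotProduct_sq (integrable_FJDP_apply hbdd hγ W) z
  have hmono := integral_mono (hU.integrable_mul_dotProduct_sq (integrable_FLDP_apply hbdd U) z)
    ((integrable_const _).add (hintW.const_mul _)) hpt
  simp only [Pi.add_apply] at hmono
  rw [integral_add (integrable_const _) (hintW.const_mul _), integral_const, integral_const_mul,
    probReal_univ, one_smul] at hmono
  set a := ∫ y, (1 + γ * enorm' (W *ᵥ y))⁻¹ * (y ⬝ᵥ z) ^ 2 ∂p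
  have hab : a + lam * (z ⬝ᵥ W⁻¹ *ᵥ z) = 1 := by
    rw [integral_add_eq_of_FJDP_eq_one hbdd hγ hW hWfix z, hWz]
  have ha : 0 ≤ a := integral_nonneg fun y => by
    have := enorm'_nonneg (W *ᵥ y)
    positivity
  have hb : 0 ≤ lam * (z ⬝ᵥ W⁻¹ *ᵥ z) := by
    have := hW.inv.posSemidef.dotProduct_mulVec_nonneg z
    simp only [star_trivial] at this
    positivity
  refine hs ▸ sq_le_sixteen_mul_sq hγ (Real.sqrt_nonneg _) ha hb hab ?_
  calc s ^ 2 = ∫ y, (enorm' (U *ᵥ y))⁻¹ * (y ⬝ᵥ z) ^ 2 ∂p + (1 + γ) * lam * (z ⬝ᵥ U⁻¹ *ᵥ z) := by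
        rw [integral_add_eq_of_FLDP_eq_one hbdd hU hUfix z, hUz, hs]
    _ ≤ ν / 2 + (2 + γ * s) * a + (1 + γ) * lam * (s * (z ⬝ᵥ W⁻¹ *ᵥ z)) := by
        gcongr
        exact hinv z
    _ = s ^ 2 / 2 + (2 + γ * s) * a + (1 + γ) * s * (lam * (z ⬝ᵥ W⁻¹ *ᵥ z)) := by
        rw [hs]; ring

end FixedPointComparison

theorem stmt11_general {d : ℕ} (p : Measure (Fin d → ℝ)) [IsProbabilityMeasure p]
    (hbdd : ∃ R : ℝ, ∀ᵐ x ∂p, enorm' x ≤ R)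
    (lam γ : ℝ) (hlam : 0 < lam) (hγ : 0 ≤ γ)
    (U1 U2 Wstar : Matrix (Fin d) (Fin d) ℝ)
    (hU1 : U1.PosDef) (hU1fix : FLDP p (γ * lam) U1 = 1)
    (hU2 : U2.PosDef) (hU2fix : FLDP p ((1 + γ) * lam) U2 = 1)
    (hW : Wstar.PosDef) (hWfix : FJDP p γ lam Wstar = 1) :
    (Wstar^2 - γ^2 • U1^2).PosSemidef
    ∧ ((16 * (1 + γ)^2) • U2^2 - Wstar^2).PosSemidef := by
  obtain ⟨R, hbdd⟩ := hbdd
  have hsq {A : Matrix (Fin d) (Fin d) ℝ} (hA : A.PosDef) :=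
    (isHermitian_iff_isSymm.mp hA.isHermitian).dotProduct_sq_mulVec
  constructor
  · refine posSemidef_sub_of_dotProduct_mulVec_le (hW.isHermitian.pow 2)
      ((hU1.isHermitian.pow 2).smul (.all _)) fun x => ?_
    rw [smul_mulVec, dotProduct_smul, smul_eq_mul, hsq hU1, hsq hW]
    exact sq_mul_norm_sq_mulVec_le_of_FLDP_of_FJDP hbdd hlam.le hγ hU1 hW hU1fix hWfix x
  · refine posSemidef_sub_of_dotProduct_mulVec_le ((hU2.isHermitian.pow 2).smul (.all _))
      (hW.isHermitian.pow 2) fun x => ?_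
    rw [smul_mulVec, dotProduct_smul, smul_eq_mul, hsq hU2, hsq hW]
    exact norm_sq_mulVec_le_of_FLDP_of_FJDP hbdd hlam.le hγ hU2 hW hU2fix hWfix x

/-- `γ²(U*_{γλ})² ⪯ (W*_{γ,λ})² ⪯ 16(1+γ)²(U*_{(1+γ)λ})²`. -/
theorem stmt11 {d : ℕ} (p : Measure (Fin d → ℝ)) [IsProbabilityMeasure p]
    (hbdd : ∃ R : ℝ, ∀ᵐ x ∂p, enorm' x ≤ R)
    (lam γ : ℝ) (hlam : 0 < lam) (hγ : 0 ≤ γ)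
    (U1 U2 Wstar : Matrix (Fin d) (Fin d) ℝ)
    (hU1 : U1.PosDef) (hU1fix : FLDP p (γ * lam) U1 = 1)
    (hU1uniq : ∀ U : Matrix (Fin d) (Fin d) ℝ, U.PosDef → FLDP p (γ * lam) U = 1 → U = U1)
    (hU2 : U2.PosDef) (hU2fix : FLDP p ((1 + γ) * lam) U2 = 1)
    (hU2uniq : ∀ U : Matrix (Fin d) (Fin d) ℝ, U.PosDef → FLDP p ((1 + γ) * lam) U = 1 → U = U2)
    (hW : Wstar.PosDef) (hWfix : FJDP p γ lam Wstar = 1)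
    (hWuniq : ∀ W : Matrix (Fin d) (Fin d) ℝ, W.PosDef → FJDP p γ lam W = 1 → W = Wstar) :
    (Wstar^2 - γ^2 • U1^2).PosSemidef
    ∧ ((16 * (1 + γ)^2) • U2^2 - Wstar^2).PosSemidef :=
  stmt11_general p hbdd lam γ hlam hγ U1 U2 Wstar hU1 hU1fix hU2 hU2fix hW hWfix
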